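/- Let α ∈ (1,2), ρ ∈ (1−1/α, 1/α), ρ̂ = 1−ρ. For every λ ≥ 0, ∫_0^∞ (1−e^{−λx}) e^{(α−1)x} (e^{x}−1)^{−(αρ̂+1)} (α−1+(1−αρ)e^{x}) dx = Γ(1−αρ̂)·λ·Γ(1−αρ+λ)/Γ(2−α+λ). -/

import Mathlib

/-!
Write `a = αρ̂` and `b = 1 - αρ`, so that `a - b = α - 1`, `a < 1` and `b > 0`. In the variable
`e^{-x}` the integrand is `(1 - e^{-λx}) π(x)` with `π = -Π̄'` for the tail
`Π̄(x) = e^{-bx} (1 - e^{-x})^{-a}`. Integrating by parts as for any subordinator,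
`∫ (1 - e^{-λx}) π(x) dx = λ ∫ e^{-λx} Π̄(x) dx`; the boundary terms vanish because
`1 - e^{-λx} = O(1 - e^{-x})` at `0` with `a < 1`, and `Π̄ → 0` at `∞` since `b > 0`.
The substitution `t = e^{-x}` turns the remaining integral into the Beta integral
`λ B(b + λ, 1 - a)`, and `b + λ + 1 - a = 2 - α + λ`.
-/

open MeasureTheory Real Set Filter Topology ProbabilityTheory

lemma ofReal_rpow_mul_one_sub_rpow {t : ℝ} (ht : t ∈ Ioc (0:ℝ) 1) (b c : ℝ) :
    ((t ^ (b - 1) * (1 - t) ^ (c - 1) : ℝ) : ℂ) =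
      (t : ℂ) ^ ((b : ℂ) - 1) * (1 - (t : ℂ)) ^ ((c : ℂ) - 1) := by
  rw [Complex.ofReal_mul, Complex.ofReal_cpow ht.1.le, Complex.ofReal_cpow (sub_nonneg.2 ht.2)]
  push_cast
  rfl

lemma integrableOn_rpow_mul_one_sub_rpow {b c : ℝ} (hb : 0 < b) (hc : 0 < c) :
    IntegrableOn (fun t : ℝ ↦ t ^ (b - 1) * (1 - t) ^ (c - 1)) (Ioo 0 1) := by
  refine IntegrableOn.mono_set ?_ Ioo_subset_Ioc_self
  have h := (Complex.betaIntegral_convergent (u := b) (v := c) (by simpa) (by simpa))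
  rw [intervalIntegrable_iff_integrableOn_Ioc_of_le zero_le_one] at h
  refine IntegrableOn.congr_fun h.re (fun t ht ↦ ?_) measurableSet_Ioc
  simp only [← ofReal_rpow_mul_one_sub_rpow ht, RCLike.re_to_complex, Complex.ofReal_re]

lemma integral_rpow_mul_one_sub_rpow {b c : ℝ} (hb : 0 < b) (hc : 0 < c) :
    ∫ t in Ioo (0:ℝ) 1, t ^ (b - 1) * (1 - t) ^ (c - 1) = beta b c := by
  rw [← integral_Ioc_eq_integral_Ioo, beta_eq_betaIntegralReal b c hb hc, Complex.betaIntegral,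
    intervalIntegral.integral_of_le zero_le_one,
    ← setIntegral_congr_fun measurableSet_Ioc (fun t ht ↦ ofReal_rpow_mul_one_sub_rpow ht b c),
    integral_complex_ofReal, Complex.ofReal_re]

lemma image_exp_neg_Ioi_zero : (fun x ↦ exp (-x)) '' Ioi 0 = Ioo 0 1 := by
  rw [show (fun x ↦ exp (-x)) = exp ∘ Neg.neg from rfl, image_comp, image_neg_Ioi, neg_zero,
    image_exp_Iio, exp_zero]

lemma hasDerivAt_exp_neg (x : ℝ) : HasDerivAt (fun y ↦ exp (-y)) (-exp (-x)) x := by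
  simpa using (hasDerivAt_neg x).exp

lemma one_sub_exp_neg_pos {x : ℝ} (hx : 0 < x) : 0 < 1 - exp (-x) := by
  simpa using hx

lemma abs_deriv_smul_rpow_mul_one_sub_rpow_exp_neg (b c x : ℝ) :
    |-exp (-x)| • (exp (-x) ^ (b - 1) * (1 - exp (-x)) ^ (c - 1)) =
      exp (-b * x) * (1 - exp (-x)) ^ (c - 1) := by
  rw [abs_neg, abs_of_pos (exp_pos _), smul_eq_mul, ← exp_mul, ← mul_assoc, ← exp_add]
  ring_nf

lemma integral_exp_neg_mul_mul_one_sub_exp_neg_rpow {b c : ℝ} (hb : 0 < b) (hc : 0 < c) :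
    ∫ x in Ioi (0:ℝ), exp (-b * x) * (1 - exp (-x)) ^ (c - 1) = beta b c := by
  rw [← integral_rpow_mul_one_sub_rpow hb hc, ← image_exp_neg_Ioi_zero,
    integral_image_eq_integral_abs_deriv_smul measurableSet_Ioi
      (fun x _ ↦ (hasDerivAt_exp_neg x).hasDerivWithinAt) (exp_injective.comp neg_injective).injOn]
  simp only [abs_deriv_smul_rpow_mul_one_sub_rpow_exp_neg]

lemma integrableOn_exp_neg_mul_mul_one_sub_exp_neg_rpow {b c : ℝ} (hb : 0 < b) (hc : 0 < c) :
    IntegrableOn (fun x ↦ exp (-b * x) * (1 - exp (-x)) ^ (c - 1)) (Ioi 0) := by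
  have h := integrableOn_rpow_mul_one_sub_rpow hb hc
  rw [← image_exp_neg_Ioi_zero,
    integrableOn_image_iff_integrableOn_abs_deriv_smul measurableSet_Ioi
      (fun x _ ↦ (hasDerivAt_exp_neg x).hasDerivWithinAt)
      (exp_injective.comp neg_injective).injOn] at h
  simpa only [abs_deriv_smul_rpow_mul_one_sub_rpow_exp_neg] using h

/-- For `a = αρ̂` and `b = 1 - αρ` this is `Γ(1 - αρ̂) π_Ĥ`, written in the variable `e^{-x}`. -/
noncomputable def ladderDensity (a b x : ℝ) : ℝ :=
  (b + (a - b) * exp (-x)) * exp (-b * x) * (1 - exp (-x)) ^ (-a - 1)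

/-- The integral of `ladderDensity a b` over `(x, ∞)`. -/
noncomputable def ladderTail (a b x : ℝ) : ℝ :=
  exp (-b * x) * (1 - exp (-x)) ^ (-a)

section

variable {a b lam : ℝ}

lemma one_sub_exp_neg_mul_le {x : ℝ} (hlam : 0 ≤ lam) (hx : 0 ≤ x) :
    1 - exp (-lam * x) ≤ (lam + 1) * (1 - exp (-x)) := by
  have bernoulli : 1 + (lam + 1) * (exp (-x) - 1) ≤ (1 + (exp (-x) - 1)) ^ (lam + 1) :=
    one_add_mul_self_le_rpow_one_add (by linarith [exp_pos (-x)]) (by linarith)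
  rw [add_sub_cancel, ← exp_mul] at bernoulli
  have : exp (-x * (lam + 1)) ≤ exp (-lam * x) := exp_le_exp.2 (by nlinarith)
  linarith

lemma one_sub_exp_neg_mul_nonneg {x : ℝ} (hlam : 0 ≤ lam) (hx : 0 ≤ x) :
    0 ≤ 1 - exp (-lam * x) :=
  sub_nonneg.2 (exp_le_one_iff.2 (by nlinarith))

lemma ladderTail_nonneg {x : ℝ} (hx : 0 ≤ x) : 0 ≤ ladderTail a b x :=
  mul_nonneg (exp_pos _).le (rpow_nonneg (sub_nonneg.2 (exp_le_one_iff.2 (by linarith))) _)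

lemma hasDerivAt_ladderTail {x : ℝ} (hx : x ≠ 0) :
    HasDerivAt (ladderTail a b) (-ladderDensity a b x) x := by
  have hs : 1 - exp (-x) ≠ 0 :=
    sub_ne_zero.2 fun h ↦ hx (neg_eq_zero.1 ((exp_eq_one_iff _).1 h.symm))
  have := ((hasDerivAt_id x).const_mul (-b)).exp.mul
    (((hasDerivAt_exp_neg x).const_sub 1).rpow_const (p := -a) (Or.inl hs))
  refine this.congr_deriv ?_
  rw [ladderDensity, rpow_sub_one hs, id]
  field_simp
  ring

lemma integrableOn_one_sub_exp_neg_mul_mul_ladderDensity (ha : a < 1) (hb : 0 < b)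
    (hlam : 0 ≤ lam) :
    IntegrableOn (fun x ↦ (1 - exp (-lam * x)) * ladderDensity a b x) (Ioi 0) := by
  refine Integrable.mono' ((integrableOn_exp_neg_mul_mul_one_sub_exp_neg_rpow hb
    (sub_pos.2 ha)).const_mul ((lam + 1) * (b + |a - b|))) (by unfold ladderDensity; fun_prop) ?_
  refine (ae_restrict_iff' measurableSet_Ioi).2 (ae_of_all _ fun x (hx : 0 < x) ↦ ?_)
  have hs := one_sub_exp_neg_pos hx
  calc ‖(1 - exp (-lam * x)) * ladderDensity a b x‖
      = (1 - exp (-lam * x)) * (|b + (a - b) * exp (-x)| * exp (-b * x) *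
          (1 - exp (-x)) ^ (-a - 1)) := by
        rw [ladderDensity, norm_mul, norm_of_nonneg (one_sub_exp_neg_mul_nonneg hlam hx.le),
          norm_mul, norm_mul, norm_eq_abs,
          norm_of_nonneg (exp_pos _).le, norm_of_nonneg (rpow_nonneg hs.le _)]
    _ ≤ ((lam + 1) * (1 - exp (-x))) * ((b + |a - b|) * exp (-b * x) *
          (1 - exp (-x)) ^ (-a - 1)) := by
        gcongr
        · exact one_sub_exp_neg_mul_le hlam hx.le
        · calc |b + (a - b) * exp (-x)| ≤ |b| + |a - b| * exp (-x) := by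
                simpa [abs_mul] using abs_add_le b ((a - b) * exp (-x))
            _ ≤ b + |a - b| := by
                rw [abs_of_pos hb]
                gcongr
                exact mul_le_of_le_one_right (abs_nonneg _) (exp_le_one_iff.2 (by linarith))
    _ = (lam + 1) * (b + |a - b|) * (exp (-b * x) * (1 - exp (-x)) ^ (1 - a - 1)) := by
        rw [sub_sub_cancel_left, rpow_sub_one hs.ne']
        field_simp

lemma tendsto_one_sub_exp_neg_mul_mul_ladderTail_nhdsGT_zero (ha : a < 1) (hlam : 0 ≤ lam) :
    Tendsto (fun x ↦ (1 - exp (-lam * x)) * ladderTail a b x) (𝓝[>] 0) (𝓝 0) := by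
  have hbound : Tendsto (fun x ↦ (lam + 1) * (exp (-b * x) * (1 - exp (-x)) ^ (1 - a)))
      (𝓝[>] 0) (𝓝 0) := by
    have : ContinuousAt (fun x : ℝ ↦ (1 - exp (-x)) ^ (1 - a)) 0 :=
      ContinuousAt.rpow_const (by fun_prop) (Or.inr (by linarith))
    have hcont : ContinuousAt
        (fun x ↦ (lam + 1) * (exp (-b * x) * (1 - exp (-x)) ^ (1 - a))) 0 := by
      fun_prop
    simpa [zero_rpow (sub_pos.2 ha).ne'] using hcont.tendsto.mono_left nhdsWithin_le_nhds
  refine squeeze_zero' ?_ ?_ hbound <;> filter_upwards [self_mem_nhdsWithin] with x (hx : 0 < x)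
  · exact mul_nonneg (one_sub_exp_neg_mul_nonneg hlam hx.le) (ladderTail_nonneg hx.le)
  · have hs := one_sub_exp_neg_pos hx
    calc (1 - exp (-lam * x)) * ladderTail a b x
        ≤ ((lam + 1) * (1 - exp (-x))) * ladderTail a b x :=
          mul_le_mul_of_nonneg_right (one_sub_exp_neg_mul_le hlam hx.le) (ladderTail_nonneg hx.le)
      _ = (lam + 1) * (exp (-b * x) * (1 - exp (-x)) ^ (1 - a)) := by
          rw [ladderTail, show 1 - a = -a + 1 by ring, rpow_add_one hs.ne']
          ring

lemma tendsto_ladderTail_atTop (hb : 0 < b) : Tendsto (ladderTail a b) atTop (𝓝 0) := by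
  have hexp : Tendsto (fun x ↦ exp (-b * x)) atTop (𝓝 0) := by
    simpa [Function.comp_def, neg_mul] using
      tendsto_exp_neg_atTop_nhds_zero.comp (Tendsto.const_mul_atTop hb tendsto_id)
  have hpow : Tendsto (fun x ↦ (1 - exp (-x)) ^ (-a)) atTop (𝓝 1) := by
    simpa using (tendsto_const_nhds.sub tendsto_exp_neg_atTop_nhds_zero).rpow_const
      (Or.inl (by norm_num : (1:ℝ) - 0 ≠ 0)) (p := -a)
  rw [← zero_mul 1]
  exact hexp.mul hpow

lemma tendsto_one_sub_exp_neg_mul_mul_ladderTail_atTop (hb : 0 < b) (hlam : 0 ≤ lam) :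
    Tendsto (fun x ↦ (1 - exp (-lam * x)) * ladderTail a b x) atTop (𝓝 0) := by
  refine squeeze_zero' ?_ ?_ (tendsto_ladderTail_atTop (a := a) hb) <;>
    filter_upwards [eventually_ge_atTop 0] with x hx
  · exact mul_nonneg (one_sub_exp_neg_mul_nonneg hlam hx) (ladderTail_nonneg hx)
  · exact mul_le_of_le_one_left (ladderTail_nonneg hx) (by linarith [exp_pos (-lam * x)])

theorem integral_one_sub_exp_neg_mul_mul_ladderDensity (ha : a < 1) (hb : 0 < b)
    (hlam : 0 ≤ lam) :
    ∫ x in Ioi (0:ℝ), (1 - exp (-lam * x)) * ladderDensity a b x =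
      lam * beta (b + lam) (1 - a) := by
  have hu : ∀ x ∈ Ioi (0:ℝ),
      HasDerivAt (fun y ↦ 1 - exp (-lam * y)) (lam * exp (-lam * x)) x := fun x _ ↦ by
    simpa [mul_comm] using ((hasDerivAt_id x).const_mul (-lam)).exp.const_sub 1
  have hkernel : (fun x ↦ lam * exp (-lam * x) * ladderTail a b x) =
      fun x ↦ lam * (exp (-(b + lam) * x) * (1 - exp (-x)) ^ (1 - a - 1)) := by
    ext x
    rw [ladderTail, sub_sub_cancel_left, neg_add, add_mul, exp_add]
    ring
  have ibp := integral_Ioi_mul_deriv_eq_deriv_mul hu (fun x hx ↦ hasDerivAt_ladderTail hx.ne')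
    (by simpa [Pi.mul_def] using
      (integrableOn_one_sub_exp_neg_mul_mul_ladderDensity ha hb hlam).neg)
    (by rw [Pi.mul_def, hkernel]
        exact (integrableOn_exp_neg_mul_mul_one_sub_exp_neg_rpow
          (add_pos_of_pos_of_nonneg hb hlam) (sub_pos.2 ha)).const_mul lam)
    (tendsto_one_sub_exp_neg_mul_mul_ladderTail_nhdsGT_zero ha hlam)
    (tendsto_one_sub_exp_neg_mul_mul_ladderTail_atTop hb hlam)
  simp only [mul_neg, integral_neg, zero_sub, sub_zero, neg_inj] at ibp
  rw [ibp, hkernel, integral_const_mul, integral_exp_neg_mul_mul_one_sub_exp_neg_rpow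
    (add_pos_of_pos_of_nonneg hb hlam) (sub_pos.2 ha)]

end

lemma exp_mul_exp_sub_one_rpow_mul_eq_ladderDensity (a b : ℝ) {x : ℝ} (hx : 0 < x) :
    exp ((a - b) * x) * (exp x - 1) ^ (-(a + 1)) * (a - b + b * exp x) = ladderDensity a b x := by
  have hsplit : exp x - 1 = exp x * (1 - exp (-x)) := by
    rw [mul_sub, ← exp_add]
    simp
  have hexp : exp ((a - b) * x) * exp (x * -(a + 1)) = exp (-b * x) * exp (-x) := by
    rw [← exp_add, ← exp_add]
    ring_nf
  have hinv : exp (-x) * exp x = 1 := by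
    rw [← exp_add]
    simp
  rw [hsplit, mul_rpow (exp_pos x).le (one_sub_exp_neg_pos hx).le, ← exp_mul, ladderDensity,
    show -a - 1 = -(a + 1) by ring]
  linear_combination ((1 - exp (-x)) ^ (-(a + 1)) * (a - b + b * exp x)) * hexp +
    (exp (-b * x) * (1 - exp (-x)) ^ (-(a + 1)) * b) * hinv

theorem descending_ladder_laplace_exponent_big_alpha
    (α ρ : ℝ) (hα : α ∈ Set.Ioo (1:ℝ) 2) (hρ : ρ ∈ Set.Ioo (1 - 1/α) (1/α))
    (lam : ℝ) (hlam : 0 ≤ lam) :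
    ∫ x in Set.Ioi (0:ℝ),
        (1 - Real.exp (-lam * x)) * Real.exp ((α - 1) * x) *
          (Real.exp x - 1) ^ (-(α * (1 - ρ) + 1)) *
          (α - 1 + (1 - α * ρ) * Real.exp x) =
    Real.Gamma (1 - α * (1 - ρ)) *
      (lam * Real.Gamma (1 - α * ρ + lam) / Real.Gamma (2 - α + lam)) := by
  have hα0 : 0 < α := by linarith [hα.1]
  have ha : α * (1 - ρ) < 1 := (lt_div_iff₀' hα0).1 (by linarith [hρ.1])
  have hb : 0 < 1 - α * ρ := sub_pos.2 ((lt_div_iff₀' hα0).1 hρ.2)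
  have hintegrand : ∀ x ∈ Ioi (0:ℝ),
      (1 - exp (-lam * x)) * exp ((α - 1) * x) * (exp x - 1) ^ (-(α * (1 - ρ) + 1)) *
          (α - 1 + (1 - α * ρ) * exp x) =
        (1 - exp (-lam * x)) * ladderDensity (α * (1 - ρ)) (1 - α * ρ) x := by
    intro x hx
    rw [← exp_mul_exp_sub_one_rpow_mul_eq_ladderDensity _ _ hx,
      show α * (1 - ρ) - (1 - α * ρ) = α - 1 by ring]
    ring
  rw [setIntegral_congr_fun measurableSet_Ioi hintegrand,
    integral_one_sub_exp_neg_mul_mul_ladderDensity ha hb hlam, beta,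
    show 1 - α * ρ + lam + (1 - α * (1 - ρ)) = 2 - α + lam by ring]
  ring
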